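/- arXiv:math/0302314 — 3 statements merged into one kernel-verified Lean document; each statement's English description precedes it below -/
import Mathlib

section
/- Let a₀, a₁, a₂ ∈ ℂ. Define, for a formal weight-2 vector v = a₀w₀ + a₁w₁ + a₂w₂, the products v ∗₁ v = Σᵢ 8aᵢ² wᵢ + Σ_{i≠j} aᵢaⱼ(wᵢ + wⱼ − w_k) (where {i,j,k} = {0,1,2}) and v ∗₃ v = (4Σᵢ aᵢ² + (1/2)Σ_{i≠j} aᵢaⱼ)·𝟙, in the free module with basis w₀, w₁, w₂, 𝟙. Then the conditions v ∗₁ v = 2v and v ∗₃ v = (1/4)𝟙 hold if and only if (a₀,a₁,a₂) is one of (1/4,0,0), (0,1/4,0), (0,0,1/4). -/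
/-!
Summing the three coordinates of `v ∗₁ v = 2v` gives `2 (v ∗₃ v) = 2 (a₀ + a₁ + a₂)`, so
`a₀ + a₁ + a₂ = 1/4`. Given that, the difference of the `i`-th and `j`-th coordinates reduces to
`(aᵢ - aⱼ) a_k = 0`. These three products force either two of the coefficients to vanish, or all
three to be equal (to `1/12`, which fails `v ∗₁ v = 2v`).
-/

section Products

variable {R : Type*} [CommRing R] [NoZeroDivisors R]

theorem eq_and_eq_or_of_sub_mul_eq_zero {x y z c : R} (hs : x + y + z = c)
    (hxy : (x - y) * z = 0) (hyz : (y - z) * x = 0) (hxz : (x - z) * y = 0) :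
    (x = y ∧ y = z) ∨ (x = c ∧ y = 0 ∧ z = 0) ∨ (x = 0 ∧ y = c ∧ z = 0) ∨
      (x = 0 ∧ y = 0 ∧ z = c) := by
  rcases mul_eq_zero.mp hxy with hxy | rfl
  · rcases mul_eq_zero.mp hyz with hyz | rfl
    · exact Or.inl ⟨sub_eq_zero.mp hxy, sub_eq_zero.mp hyz⟩
    · obtain rfl : y = 0 := by linear_combination -hxy
      exact Or.inr (Or.inr (Or.inr ⟨rfl, rfl, by linear_combination hs⟩))
  · rcases mul_eq_zero.mp hxz with hx | rfl
    · obtain rfl : x = 0 := by linear_combination hx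
      exact Or.inr (Or.inr (Or.inl ⟨rfl, by linear_combination hs, rfl⟩))
    · exact Or.inr (Or.inl ⟨by linear_combination hs, rfl, rfl⟩)

end Products

section Conformal

variable {K : Type*} [Field K] [CharZero K]

theorem conformal_coeffs_of_eq {x y z : K}
    (h0 : 8 * x ^ 2 + 2 * x * y + 2 * x * z - 2 * y * z = 2 * x)
    (h1 : 8 * y ^ 2 + 2 * x * y + 2 * y * z - 2 * x * z = 2 * y)
    (h2 : 8 * z ^ 2 + 2 * x * z + 2 * y * z - 2 * x * y = 2 * z)
    (h3 : 4 * (x ^ 2 + y ^ 2 + z ^ 2) + (x * y + x * z + y * z) = 1 / 4) :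
    (x = 1 / 4 ∧ y = 0 ∧ z = 0) ∨ (x = 0 ∧ y = 1 / 4 ∧ z = 0) ∨
      (x = 0 ∧ y = 0 ∧ z = 1 / 4) := by
  have hs : x + y + z = 1 / 4 := by linear_combination (2 * h3 - h0 - h1 - h2) / 2
  have hxy : (x - y) * z = 0 := by linear_combination (h1 - h0) / 4 + 2 * (x - y) * hs
  have hyz : (y - z) * x = 0 := by linear_combination (h2 - h1) / 4 + 2 * (y - z) * hs
  have hxz : (x - z) * y = 0 := by linear_combination (h2 - h0) / 4 + 2 * (x - z) * hs
  rcases eq_and_eq_or_of_sub_mul_eq_zero hs hxy hyz hxz with ⟨rfl, rfl⟩ | h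
  · obtain rfl : x = 1 / 12 := by linear_combination hs / 3
    norm_num at h0
  · exact h

theorem conformal_coeffs_iff {x y z : K} :
    (8 * x ^ 2 + 2 * x * y + 2 * x * z - 2 * y * z = 2 * x ∧
        8 * y ^ 2 + 2 * x * y + 2 * y * z - 2 * x * z = 2 * y ∧
        8 * z ^ 2 + 2 * x * z + 2 * y * z - 2 * x * y = 2 * z ∧
        4 * (x ^ 2 + y ^ 2 + z ^ 2) + (x * y + x * z + y * z) = 1 / 4) ↔
      (x = 1 / 4 ∧ y = 0 ∧ z = 0) ∨ (x = 0 ∧ y = 1 / 4 ∧ z = 0) ∨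
        (x = 0 ∧ y = 0 ∧ z = 1 / 4) := by
  constructor
  · rintro ⟨h0, h1, h2, h3⟩
    exact conformal_coeffs_of_eq h0 h1 h2 h3
  · rintro (⟨rfl, rfl, rfl⟩ | ⟨rfl, rfl, rfl⟩ | ⟨rfl, rfl, rfl⟩) <;> norm_num

end Conformal

/-- `v ∗₁ v` is recorded by its coordinates in the basis `w₀, w₁, w₂` and `v ∗₃ v` by its
coefficient of `𝟙`. -/
theorem conformal_vectors_classification
    (star1 : (Fin 3 → ℂ) → Fin 3 → ℂ)
    (hstar1 : ∀ a : Fin 3 → ℂ, star1 a =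
      ![8 * a 0 ^ 2 + 2 * a 0 * a 1 + 2 * a 0 * a 2 - 2 * a 1 * a 2,
        8 * a 1 ^ 2 + 2 * a 0 * a 1 + 2 * a 1 * a 2 - 2 * a 0 * a 2,
        8 * a 2 ^ 2 + 2 * a 0 * a 2 + 2 * a 1 * a 2 - 2 * a 0 * a 1])
    (star3 : (Fin 3 → ℂ) → ℂ)
    (hstar3 : ∀ a : Fin 3 → ℂ, star3 a =
      4 * (a 0 ^ 2 + a 1 ^ 2 + a 2 ^ 2) + (a 0 * a 1 + a 0 * a 2 + a 1 * a 2)) :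
    ∀ a : Fin 3 → ℂ,
      (star1 a = (2 : ℂ) • a ∧ star3 a = 1/4) ↔
        (a = ![1/4, 0, 0] ∨ a = ![0, 1/4, 0] ∨ a = ![0, 0, 1/4]) := by
  intro a
  obtain ⟨x, y, z, rfl⟩ : ∃ x y z, a = ![x, y, z] :=
    ⟨a 0, a 1, a 2, (FinVec.etaExpand_eq a).symm⟩
  rw [hstar1, hstar3]
  simp only [Matrix.cons_val_zero, Matrix.cons_val_one, Matrix.cons_val_two, Matrix.head_cons,
    Matrix.tail_cons, Matrix.smul_cons, Matrix.smul_empty, smul_eq_mul, Matrix.vecCons_inj,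
    and_true, and_assoc]
  exact conformal_coeffs_iff
end

section
/- Let R be a commutative ring containing ℚ, and let ω, J ∈ R satisfy the three relations: (i) −(59680000/3501)ω⁶ − (184400/1167)ω³J² + J⁴ = 0; (ii) −926640·ω²J³ − 89856000·ω⁵J = 0; (iii) 21565440000·ω⁷ − 680659200·ω⁴J² − 5559840·ωJ⁴ = 0. Then ω⁸ = 0, ω²J⁴ = 0, ω⁵J² = 0, and J⁸ = 0. Consequently the subring ℚ[ω, J] ⊆ R is spanned over ℚ by the monomials ω^p J^q with 0 ≤ p, q ≤ 7. -/
/-!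
The three relations generate an ideal of `ℚ[ω, J]` containing `ω⁸`, `ω²J⁴`, `ω⁵J²` and `J⁸`,
each as an explicit combination of the relations with polynomial coefficients. Once `ω⁸ = J⁸ = 0`,
every monomial `ω^p J^q` with `p ≥ 8` or `q ≥ 8` vanishes, so the monomials with `p, q ≤ 7`
span the algebra generated by `ω` and `J`.
-/

theorem Algebra.adjoin_pair_le_span_monomials {K R : Type*} [CommSemiring K] [CommSemiring R]
    [Algebra K R] {x y : R} {m n : ℕ} (hx : x ^ (m + 1) = 0) (hy : y ^ (n + 1) = 0) :
    Subalgebra.toSubmodule (Algebra.adjoin K {x, y}) ≤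
      Submodule.span K {z : R | ∃ p q : ℕ, p ≤ m ∧ q ≤ n ∧ z = x ^ p * y ^ q} := by
  rw [Algebra.adjoin_eq_span]
  refine Submodule.span_le.2 fun z hz ↦ ?_
  obtain ⟨p, q, rfl⟩ := (Submonoid.mem_closure_pair x y z).1 hz
  by_cases hp : p ≤ m
  · by_cases hq : q ≤ n
    · exact Submodule.subset_span ⟨p, q, hp, hq, rfl⟩
    · simp [pow_eq_zero_of_le (show n + 1 ≤ q by omega) hy]
  · simp [pow_eq_zero_of_le (show m + 1 ≤ p by omega) hx]

/-- The nilpotency step in the proof of `C₂`-cofiniteness of the `W₃` algebra of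
central charge `6/5`: in a commutative `ℚ`-algebra, the three relations coming from
the singular vector `𝐯¹²` force `ω⁸ = ω²J⁴ = ω⁵J² = J⁸ = 0`, so that `ℚ[ω,J]` is
spanned by the monomials `ω^p J^q` with `0 ≤ p, q ≤ 7`. -/
theorem c2_cofiniteness_nilpotency
    (R : Type*) [CommRing R] [Algebra ℚ R] (ω J : R)
    (h1 : -(((59680000 : ℚ) / 3501) • ω ^ 6) - ((184400 : ℚ) / 1167) • (ω ^ 3 * J ^ 2)
      + J ^ 4 = 0)
    (h2 : -((926640 : ℚ) • (ω ^ 2 * J ^ 3)) - (89856000 : ℚ) • (ω ^ 5 * J) = 0)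
    (h3 : (21565440000 : ℚ) • ω ^ 7 - (680659200 : ℚ) • (ω ^ 4 * J ^ 2)
      - (5559840 : ℚ) • (ω * J ^ 4) = 0) :
    ω ^ 8 = 0 ∧ ω ^ 2 * J ^ 4 = 0 ∧ ω ^ 5 * J ^ 2 = 0 ∧ J ^ 8 = 0 ∧
    (Algebra.adjoin ℚ ({ω, J} : Set R)).toSubmodule ≤
      Submodule.span ℚ {m : R | ∃ p q : ℕ, p ≤ 7 ∧ q ≤ 7 ∧ m = ω ^ p * J ^ q} := by
  have hω : ω ^ 8 = 0 := by
    linear_combination (norm := algebra) ((-4279 / 239200000 : ℚ) • ω ^ 2) * h1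
      + ((-43 / 202176000000 : ℚ) • J) * h2 + ((1169 / 36270374400000 : ℚ) • ω) * h3
  have hω2J4 : ω ^ 2 * J ^ 4 = 0 := by
    linear_combination (norm := algebra) ((24896 / 94185 : ℚ) • ω ^ 2) * h1
      + ((-163 / 79606800 : ℚ) • J) * h2 + ((373 / 1785182490 : ℚ) • ω) * h3
  have hω5J2 : ω ^ 5 * J ^ 2 = 0 := by
    linear_combination (norm := algebra) ((-4279 / 1569750 : ℚ) • ω ^ 2) * h1
      + ((53 / 5307120000 : ℚ) • J) * h2 + ((-4103 / 1904194656000 : ℚ) • ω) * h3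
  have hJ : J ^ 8 = 0 := by
    linear_combination (norm := algebra) J ^ 4 * h1
      + ((-415000 / 364968747 : ℚ) • (ω ^ 4 * J) + (-51860 / 364968747 : ℚ) • (ω * J ^ 3)) * h2
      + ((-10375 / 2189812482 : ℚ) • (ω ^ 2 * J ^ 2)) * h3
  exact ⟨hω, hω2J4, hω5J2, hJ, Algebra.adjoin_pair_le_span_monomials hω hJ⟩
end

section
/- Let u¹ = w₁ + ξ²w₂ + ξw₀ and u² = w₁ + ξw₂ + ξ²w₀ in the free ℂ-module with basis w₀, w₁, w₂, where ξ = exp(2π√−1/3), and let τ be the linear map cyclically permuting w₁ → w₂ → w₀ → w₁, and σ the map swapping w₁ ↔ w₂ and fixing w₀. Then τu¹ = ξu¹, τu² = ξ²u², and σu¹ = ξ²u². Moreover, defining the symmetric bilinear product w_i ∗ w_j = 8w_i if i = j and w_i + w_j − w_k if i ≠ j (with {i,j,k} = {0,1,2}), one has u¹ ∗ u¹ = 4u² and (u¹ ∗ u¹) ∗ u¹ = 140·ω, where ω = (1/5)(w₀ + w₁ + w₂). -/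
open Complex Matrix

/-! All identities are polynomial identities in `ξ` modulo `ξ² + ξ + 1`, which vanishes at the
primitive cube root of unity `ξ = e^{2πi/3}`. In the coordinates of `w₀, w₁, w₂` one has
`u¹ = (ξ, 1, ξ²)` and `u² = (ξ², 1, ξ)`, and by bilinearity
`(u¹ ∗ u¹) ∗ u¹ = 4 (u² ∗ u¹) = 28 (w₀ + w₁ + w₂)`. -/

theorem Complex.exp_two_pi_I_div_three_sq_add_self_add_one :
    exp (2 * Real.pi * I / 3) ^ 2 + exp (2 * Real.pi * I / 3) + 1 = 0 := by
  have h := (isPrimitiveRoot_exp 3 three_ne_zero).geom_sum_eq_zero (by norm_num)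
  simp only [Finset.sum_range_succ, Finset.sum_range_zero, Nat.cast_ofNat] at h
  linear_combination h

namespace WeightTwo

variable {R : Type*} [CommRing R]

def rotate (a : Fin 3 → R) : Fin 3 → R := ![a 2, a 0, a 1]

def swap (a : Fin 3 → R) : Fin 3 → R := ![a 0, a 2, a 1]

def star (a b : Fin 3 → R) : Fin 3 → R :=
  ![8 * a 0 * b 0 + (a 0 * b 1 + a 1 * b 0) + (a 0 * b 2 + a 2 * b 0)
      - (a 1 * b 2 + a 2 * b 1),
    8 * a 1 * b 1 + (a 0 * b 1 + a 1 * b 0) + (a 1 * b 2 + a 2 * b 1)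
      - (a 0 * b 2 + a 2 * b 0),
    8 * a 2 * b 2 + (a 0 * b 2 + a 2 * b 0) + (a 1 * b 2 + a 2 * b 1)
      - (a 0 * b 1 + a 1 * b 0)]

def u₁ (ξ : R) : Fin 3 → R := ![ξ, 1, ξ ^ 2]

def u₂ (ξ : R) : Fin 3 → R := ![ξ ^ 2, 1, ξ]

theorem star_smul_left (c : R) (a b : Fin 3 → R) : star (c • a) b = c • star a b := by
  simp only [star, Pi.smul_apply, smul_eq_mul, smul_vec3]
  exact vec3_eq (by ring) (by ring) (by ring)

variable {ξ : R}

theorem rotate_u₁ (h : ξ ^ 3 = 1) : rotate (u₁ ξ) = ξ • u₁ ξ := by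
  show ![ξ ^ 2, ξ, 1] = ξ • ![ξ, 1, ξ ^ 2]
  simp only [smul_vec3, smul_eq_mul]
  exact vec3_eq (by ring) (by ring) (by linear_combination -h)

theorem rotate_u₂ (h : ξ ^ 3 = 1) : rotate (u₂ ξ) = ξ ^ 2 • u₂ ξ := by
  show ![ξ, ξ ^ 2, 1] = ξ ^ 2 • ![ξ ^ 2, 1, ξ]
  simp only [smul_vec3, smul_eq_mul]
  exact vec3_eq (by linear_combination -ξ * h) (by ring) (by linear_combination -h)

theorem swap_u₁ (h : ξ ^ 3 = 1) : swap (u₁ ξ) = ξ ^ 2 • u₂ ξ := by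
  show ![ξ, ξ ^ 2, 1] = ξ ^ 2 • ![ξ ^ 2, 1, ξ]
  simp only [smul_vec3, smul_eq_mul]
  exact vec3_eq (by linear_combination -ξ * h) (by ring) (by linear_combination -h)

theorem star_u₁_u₁ (h : ξ ^ 2 + ξ + 1 = 0) : star (u₁ ξ) (u₁ ξ) = (4 : R) • u₂ ξ := by
  simp only [star, u₁, u₂, cons_val, smul_vec3, smul_eq_mul]
  exact vec3_eq (by linear_combination 2 * ξ * h) (by linear_combination (4 - 2 * ξ) * h)
    (by linear_combination (8 * ξ ^ 2 - 6 * ξ) * h)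

theorem star_u₂_u₁ (h : ξ ^ 2 + ξ + 1 = 0) : star (u₂ ξ) (u₁ ξ) = ![7, 7, 7] := by
  simp only [star, u₁, u₂, cons_val]
  exact vec3_eq (by linear_combination (ξ ^ 2 + 7 * ξ - 7) * h)
    (by linear_combination (1 + ξ - ξ ^ 2) * h) (by linear_combination (ξ ^ 2 + 7 * ξ - 7) * h)

end WeightTwo

/-- The weight-2 structure of `M ⊂ V_{√2A₂}`, in coordinates with respect to the basis
`w₀, w₁, w₂`: with `ξ = e^{2πi/3}`, `u¹ = w₁ + ξ²w₂ + ξw₀`, `u² = w₁ + ξw₂ + ξ²w₀`,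
the cyclic map `τ : w₁ → w₂ → w₀ → w₁` and swap `σ : w₁ ↔ w₂`, and the symmetric
bilinear product `wᵢ ∗ wⱼ = 8wᵢ` (`i = j`), `wᵢ + wⱼ - w_k` (`i ≠ j`), one has
`τu¹ = ξu¹`, `τu² = ξ²u²`, `σu¹ = ξ²u²`, `u¹ ∗ u¹ = 4u²` and
`(u¹ ∗ u¹) ∗ u¹ = 140ω` where `ω = (1/5)(w₀+w₁+w₂)`. -/
theorem weight_two_generators
    (ξ : ℂ) (hξ : ξ = Complex.exp (2 * Real.pi * I / 3))
    (w : Fin 3 → Fin 3 → ℂ) (hw : ∀ i, w i = Pi.single i 1)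
    (τ σ : (Fin 3 → ℂ) → (Fin 3 → ℂ))
    (hτ : ∀ a : Fin 3 → ℂ, τ a = ![a 2, a 0, a 1])
    (hσ : ∀ a : Fin 3 → ℂ, σ a = ![a 0, a 2, a 1])
    (mul : (Fin 3 → ℂ) → (Fin 3 → ℂ) → (Fin 3 → ℂ))
    (hmul : ∀ a b : Fin 3 → ℂ, mul a b =
      ![8 * a 0 * b 0 + (a 0 * b 1 + a 1 * b 0) + (a 0 * b 2 + a 2 * b 0)
          - (a 1 * b 2 + a 2 * b 1),
        8 * a 1 * b 1 + (a 0 * b 1 + a 1 * b 0) + (a 1 * b 2 + a 2 * b 1)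
          - (a 0 * b 2 + a 2 * b 0),
        8 * a 2 * b 2 + (a 0 * b 2 + a 2 * b 0) + (a 1 * b 2 + a 2 * b 1)
          - (a 0 * b 1 + a 1 * b 0)])
    (u₁ u₂ ω : Fin 3 → ℂ)
    (hu₁ : u₁ = w 1 + ξ ^ 2 • w 2 + ξ • w 0)
    (hu₂ : u₂ = w 1 + ξ • w 2 + ξ ^ 2 • w 0)
    (hω : ω = (1/5 : ℂ) • (w 0 + w 1 + w 2)) :
    τ u₁ = ξ • u₁ ∧ τ u₂ = ξ ^ 2 • u₂ ∧ σ u₁ = ξ ^ 2 • u₂ ∧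
    mul u₁ u₁ = (4 : ℂ) • u₂ ∧ mul (mul u₁ u₁) u₁ = (140 : ℂ) • ω := by
  have hξ₂ : ξ ^ 2 + ξ + 1 = 0 := hξ ▸ exp_two_pi_I_div_three_sq_add_self_add_one
  have hξ₃ : ξ ^ 3 = 1 := by linear_combination (ξ - 1) * hξ₂
  have hw₀ : w 0 = ![1, 0, 0] := by rw [hw]; ext i; fin_cases i <;> rfl
  have hw₁ : w 1 = ![0, 1, 0] := by rw [hw]; ext i; fin_cases i <;> rfl
  have hw₂ : w 2 = ![0, 0, 1] := by rw [hw]; ext i; fin_cases i <;> rfl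
  have hu₁' : u₁ = WeightTwo.u₁ ξ := by
    simp only [hu₁, hw₀, hw₁, hw₂, smul_vec3, vec3_add, smul_eq_mul, WeightTwo.u₁]
    exact vec3_eq (by ring) (by ring) (by ring)
  have hu₂' : u₂ = WeightTwo.u₂ ξ := by
    simp only [hu₂, hw₀, hw₁, hw₂, smul_vec3, vec3_add, smul_eq_mul, WeightTwo.u₂]
    exact vec3_eq (by ring) (by ring) (by ring)
  have hω' : (140 : ℂ) • ω = (4 : ℂ) • ![7, 7, 7] := by
    simp only [hω, hw₀, hw₁, hw₂, smul_vec3, vec3_add, smul_eq_mul]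
    exact vec3_eq (by norm_num) (by norm_num) (by norm_num)
  obtain rfl : τ = WeightTwo.rotate := funext hτ
  obtain rfl : σ = WeightTwo.swap := funext hσ
  obtain rfl : mul = WeightTwo.star := funext₂ hmul
  subst hu₁' hu₂'
  rw [hω', WeightTwo.star_u₁_u₁ hξ₂, WeightTwo.star_smul_left, WeightTwo.star_u₂_u₁ hξ₂]
  exact ⟨WeightTwo.rotate_u₁ hξ₃, WeightTwo.rotate_u₂ hξ₃, WeightTwo.swap_u₁ hξ₃, rfl, rfl⟩
end
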